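/- Let m ≥ 2 be even and let (R_n)_{n≥0} be a cyclic urn process with m types started with one ball of type 0. Then for every n ≥ 2, E[(u_{m/2}(R_n))²] = (n+1)/3, where u_{m/2}(R_n) = Σ_{t=0}^{m−1} (−1)^t R_{n,t} is real-valued. -/

import Mathlib

open MeasureTheory ProbabilityTheory Filter Complex Finset Topology

noncomputable section

/-- `ω = exp(2πi/m)`, the `m`-th elementary root of unity. -/
def cw (m : ℕ) : ℂ := Complex.exp (2 * Real.pi * Complex.I / m)

/-- `λ_k = cos(2πk/m)`. -/
def lam (m k : ℕ) : ℝ := Real.cos (2 * Real.pi * k / m)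

/-- `μ_k = sin(2πk/m)`. -/
def muim (m k : ℕ) : ℝ := Real.sin (2 * Real.pi * k / m)

/-- the eigenvector `v_k = (1/m)(1, ω^{-k}, …, ω^{-(m-1)k})`. -/
def vvec (m k : ℕ) : Fin m → ℂ :=
  fun t => (m : ℂ)⁻¹ * cw m ^ (-((k * (t : ℕ) : ℕ) : ℤ))

/-- the dual coefficient `u_k(w) = ∑_t ω^{kt} w_t`. -/
def ucoef (m k : ℕ) (w : Fin m → ℝ) : ℂ :=
  ∑ t : Fin m, cw m ^ (k * (t : ℕ)) * (w t : ℂ)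

/-- the replacement matrix `A` of the cyclic urn. -/
def repA (m : ℕ) : Matrix (Fin m) (Fin m) ℝ :=
  Matrix.of fun i j => if (j : ℕ) = ((i : ℕ) + 1) % m then 1 else 0

/-- the filtration `𝓕_n = σ(R_0, …, R_n)`. -/
def urnFilt {Ω : Type*} [MeasurableSpace Ω] (m : ℕ) (R : ℕ → Ω → Fin m → ℝ) (n : ℕ) :
    MeasurableSpace Ω :=
  ⨆ i ∈ Finset.range (n + 1), MeasurableSpace.comap (R i) inferInstance

/-- A cyclic urn process with `m` types started with one ball of type `j0`. -/
structure IsCyclicUrn {Ω : Type*} [MeasurableSpace Ω] (μ : Measure Ω) (m : ℕ) (j0 : Fin m)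
    (R : ℕ → Ω → Fin m → ℝ) : Prop where
  isProb : IsProbabilityMeasure μ
  meas : ∀ n, Measurable (R n)
  natVal : ∀ n ω i, ∃ z : ℕ, R n ω i = z
  init : ∀ ω, R 0 ω = fun i => if i = j0 then 1 else 0
  step : ∀ n, ∀ j : Fin m,
    μ[Set.indicator {ω | R (n + 1) ω =
        fun i => R n ω i + if (i : ℕ) = ((j : ℕ) + 1) % m then 1 else 0}
      (fun _ => (1 : ℝ)) | urnFilt m R n]
      =ᵐ[μ] fun ω => R n ω j / (n + 1)

/-- componentwise expectation `E[X]` of a random vector. -/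
def expVec {Ω : Type*} [MeasurableSpace Ω] (μ : Measure Ω) {m : ℕ}
    (X : Ω → Fin m → ℝ) : Fin m → ℝ := fun i => ∫ ω, X ω i ∂μ

/-- the martingale `M_{k,n} = (Γ(n+1)/Γ(n+1+ω^k)) u_k(R_n - E[R_n])`, with `M_{k,0} = 0`. -/
def Mart {Ω : Type*} [MeasurableSpace Ω] (μ : Measure Ω) (m k : ℕ)
    (R : ℕ → Ω → Fin m → ℝ) (n : ℕ) (ω : Ω) : ℂ :=
  if n = 0 then 0
  else (Complex.Gamma ((n : ℂ) + 1) / Complex.Gamma ((n : ℂ) + 1 + cw m ^ k)) *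
    ucoef m k (fun t => R n ω t - expVec μ (R n) t)

/-- `ν` is the centered Gaussian distribution `𝒩(0, S)` on `ℝ^d` (Cramér–Wold
characterization: every linear functional is one-dimensional centered Gaussian). -/
def IsCenteredGaussian {d : ℕ} (ν : Measure (Fin d → ℝ)) (S : Matrix (Fin d) (Fin d) ℝ) : Prop :=
  IsProbabilityMeasure ν ∧
  ∀ l : Fin d → ℝ,
    ν.map (fun x => ∑ i, l i * x i) =
      gaussianReal 0 (Real.toNNReal (∑ i, ∑ j, l i * S i j * l j))

/-- convergence in distribution of the random vectors `X_n` to the law `ν`. -/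
def TendstoInDist {Ω : Type*} [MeasurableSpace Ω] (μ : Measure Ω) {d : ℕ}
    (X : ℕ → Ω → Fin d → ℝ) (ν : Measure (Fin d → ℝ)) : Prop :=
  ∀ f : BoundedContinuousFunction (Fin d → ℝ) ℝ,
    Tendsto (fun n => ∫ ω, f (X n ω) ∂μ) atTop (𝓝 (∫ x, f x ∂ν))

/-!
Write `S_n = ∑ₜ (-1)ᵗ R_{n,t}`; since `ω ^ (m / 2) = -1`, this is `u_{m/2}(R_n)`. The urn holds
`n + 1` balls at time `n`, and given `𝓕_n` the step adds a ball of type `j + 1` with probability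
`R_{n,j} / (n + 1)`; as `m` is even, this changes `S_n` by `(-1)^(j+1)`. Summing over `j`,
`E[S_{n+1}² | 𝓕_n] = S_n² + 1 - 2 S_n² / (n + 1)`, so `a_n = E[S_n²]` satisfies
`a_{n+1} = (1 - 2 / (n + 1)) a_n + 1` with `a_0 = 1`. Hence `a_1 = 0`, and from `a_2 = 1` on
the recursion is solved by `a_n = (n + 1) / 3`.
-/

lemma integrable_comp_of_ae_norm_le {Ω E F : Type*} [MeasurableSpace Ω] {μ : Measure Ω}
    [IsFiniteMeasure μ] [NormedAddCommGroup E] [ProperSpace E] [NormedAddCommGroup F]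
    {φ : E → F} (hφ : Continuous φ) {X : Ω → E} (hX : AEStronglyMeasurable X μ) {C : ℝ}
    (hC : ∀ᵐ ω ∂μ, ‖X ω‖ ≤ C) : Integrable (fun ω => φ (X ω)) μ := by
  obtain ⟨B, hB⟩ := (isCompact_closedBall (0 : E) C).exists_bound_of_continuousOn hφ.continuousOn
  refine .of_bound (hφ.comp_aestronglyMeasurable hX) B ?_
  filter_upwards [hC] with ω hω
  exact hB _ (mem_closedBall_zero_iff.2 hω)

lemma norm_le_sum_of_nonneg {m : ℕ} {w : Fin m → ℝ} (hw : 0 ≤ w) : ‖w‖ ≤ ∑ t, w t :=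
  (pi_norm_le_iff_of_nonneg (sum_nonneg fun t _ => hw t)).2 fun t => by
    rw [Real.norm_of_nonneg (hw t)]
    exact single_le_sum (fun s _ => hw s) (mem_univ t)

lemma urnFilt_le {Ω : Type*} [MeasurableSpace Ω] {m : ℕ} {R : ℕ → Ω → Fin m → ℝ}
    (hR : ∀ n, Measurable (R n)) (n : ℕ) : urnFilt m R n ≤ ‹MeasurableSpace Ω› :=
  iSup₂_le fun i _ => (hR i).comap_le

lemma measurable_urnFilt {Ω : Type*} [MeasurableSpace Ω] {m : ℕ} {R : ℕ → Ω → Fin m → ℝ}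
    (n : ℕ) : Measurable[urnFilt m R n] (R n) :=
  measurable_iff_comap_le.2 <| le_iSup₂ (f := fun i (_ : i ∈ range (n + 1)) =>
    MeasurableSpace.comap (R i) inferInstance) n (self_mem_range_succ n)

namespace CyclicUrn

open Function

def incr (m : ℕ) (j : Fin m) : Fin m → ℝ :=
  fun i => if (i : ℕ) = ((j : ℕ) + 1) % m then 1 else 0

variable {Ω : Type*} {m : ℕ}

def nextType (j : Fin m) : Fin m := ⟨((j : ℕ) + 1) % m, Nat.mod_lt _ j.pos⟩

def altSum (w : Fin m → ℝ) : ℝ := ∑ t : Fin m, (-1 : ℝ) ^ (t : ℕ) * w t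

def stepEvent (R : ℕ → Ω → Fin m → ℝ) (n : ℕ) (j : Fin m) : Set Ω :=
  {ω | R (n + 1) ω = R n ω + incr m j}

lemma incr_eq_single (j : Fin m) : incr m j = Pi.single (nextType j) 1 := by
  ext i
  simp [incr, nextType, Pi.single_apply, Fin.ext_iff]

lemma nextType_injective : Injective (nextType (m := m)) := by
  intro j j' h
  have h' : (j : ℕ) + 1 ≡ (j' : ℕ) + 1 [MOD m] := congrArg Fin.val h
  exact Fin.ext (Nat.ModEq.eq_of_lt_of_lt (h'.add_right_cancel' 1) j.isLt j'.isLt)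

lemma incr_injective : Injective (incr m) := by
  intro j j' h
  have h' := congrFun h (nextType j)
  simp only [incr_eq_single, Pi.single_apply, if_true] at h'
  exact nextType_injective (by simpa using h'.symm)

lemma sum_incr (j : Fin m) : ∑ i, incr m j i = 1 := by
  simp [incr_eq_single]

lemma continuous_altSum : Continuous (altSum (m := m)) := by
  unfold altSum; fun_prop

lemma altSum_add (v w : Fin m → ℝ) : altSum (v + w) = altSum v + altSum w := by
  simp [altSum, mul_add, sum_add_distrib]

lemma altSum_incr (hme : 2 ∣ m) (j : Fin m) : altSum (incr m j) = (-1) ^ ((j : ℕ) + 1) := by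
  have hpow : (-1 : ℝ) ^ (((j : ℕ) + 1) % m) = (-1) ^ ((j : ℕ) + 1) := by
    rw [neg_one_pow_eq_pow_mod_two, Nat.mod_mod_of_dvd _ hme, ← neg_one_pow_eq_pow_mod_two]
  simpa [altSum, incr_eq_single, Pi.single_apply, nextType] using hpow

lemma sum_altSum_add_incr_sq_mul (hme : 2 ∣ m) (w : Fin m → ℝ) {s : ℝ} (hs : ∑ j, w j = s)
    (hs0 : s ≠ 0) :
    ∑ j, altSum (w + incr m j) ^ 2 * (w j / s) = (1 - 2 / s) * altSum w ^ 2 + 1 := by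
  have hsign : ∑ j : Fin m, (-1 : ℝ) ^ ((j : ℕ) + 1) * w j = -altSum w := by
    simp [altSum, pow_succ, sum_neg_distrib]
  have hexpand (j : Fin m) : altSum (w + incr m j) ^ 2 * (w j / s) =
      (altSum w ^ 2 * w j + 2 * altSum w * ((-1) ^ ((j : ℕ) + 1) * w j) + w j) / s := by
    rw [altSum_add, altSum_incr hme]
    have hsq : ((-1 : ℝ) ^ ((j : ℕ) + 1)) ^ 2 = 1 := by rw [pow_right_comm, neg_one_sq, one_pow]
    linear_combination (w j / s) * hsq
  simp_rw [hexpand, ← sum_div, sum_add_distrib, ← mul_sum, hsign, hs]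
  field_simp
  ring

lemma pairwise_disjoint_stepEvent (R : ℕ → Ω → Fin m → ℝ) (n : ℕ) :
    Pairwise (Disjoint on stepEvent R n) := by
  intro j j' hne
  refine Set.disjoint_left.2 fun ω (hj : _ = _) (hj' : _ = _) => hne ?_
  exact incr_injective (add_left_cancel (hj.symm.trans hj'))

end CyclicUrn

namespace IsCyclicUrn

open CyclicUrn Function

variable {Ω : Type*} [MeasurableSpace Ω] {μ : Measure Ω} {m : ℕ} {j0 : Fin m}
  {R : ℕ → Ω → Fin m → ℝ}

lemma measurableSet_stepEvent (hR : IsCyclicUrn μ m j0 R) (n : ℕ) (j : Fin m) :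
    MeasurableSet (stepEvent R n j) :=
  measurableSet_eq_fun (hR.meas (n + 1)) ((hR.meas n).add_const _)

lemma nonneg (hR : IsCyclicUrn μ m j0 R) (n : ℕ) (ω : Ω) : 0 ≤ R n ω := fun t => by
  obtain ⟨z, hz⟩ := hR.natVal n ω t
  simp [hz]

lemma setIntegral_stepEvent (hR : IsCyclicUrn μ m j0 R) (n : ℕ) (j : Fin m) {f : Ω → ℝ}
    (hf : StronglyMeasurable[urnFilt m R n] f) (hfi : Integrable f μ) :
    ∫ ω in stepEvent R n j, f ω ∂μ = ∫ ω, f ω * (R n ω j / (n + 1)) ∂μ := by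
  have := hR.isProb
  have hle := urnFilt_le hR.meas n
  have : IsFiniteMeasure (μ.trim hle) := isFiniteMeasure_trim hle
  set g := (stepEvent R n j).indicator (fun _ => (1 : ℝ))
  have hA := measurableSet_stepEvent hR n j
  have hfg : f * g = (stepEvent R n j).indicator f := by
    ext ω; by_cases hω : ω ∈ stepEvent R n j <;> simp [g, hω]
  have hgi : Integrable g μ := (integrable_const 1).indicator hA
  have hpull := condExp_mul_of_stronglyMeasurable_left hf (hfg ▸ hfi.indicator hA) hgi
  calc ∫ ω in stepEvent R n j, f ω ∂μ = ∫ ω, (f * g) ω ∂μ := by rw [hfg, integral_indicator hA]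
    _ = ∫ ω, (μ[f * g | urnFilt m R n]) ω ∂μ := (integral_condExp hle).symm
    _ = ∫ ω, f ω * (R n ω j / (n + 1)) ∂μ := by
      refine integral_congr_ae ?_
      filter_upwards [hpull, hR.step n j] with ω h1 h2
      rw [h1, Pi.mul_apply, ← h2]
      rfl

lemma integrable_comp_of_ae_sum (hR : IsCyclicUrn μ m j0 R) {n : ℕ}
    (hsum : ∀ᵐ ω ∂μ, ∑ t, R n ω t = n + 1) {φ : (Fin m → ℝ) → ℝ} (hφ : Continuous φ) :
    Integrable (fun ω => φ (R n ω)) μ := by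
  have := hR.isProb
  refine integrable_comp_of_ae_norm_le hφ (hR.meas n).aestronglyMeasurable (C := n + 1) ?_
  filter_upwards [hsum] with ω hω
  exact hω ▸ norm_le_sum_of_nonneg (hR.nonneg n ω)

/-- The structure only prescribes conditional probabilities of the step events; they add up to
`(∑ t, R n ω t) / (n + 1) = 1`, which forces one of them to happen almost surely. -/
lemma ae_mem_iUnion_stepEvent (hR : IsCyclicUrn μ m j0 R) {n : ℕ}
    (hsum : ∀ᵐ ω ∂μ, ∑ t, R n ω t = n + 1) : ∀ᵐ ω ∂μ, ω ∈ ⋃ j, stepEvent R n j := by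
  have := hR.isProb
  have hA := measurableSet_stepEvent hR n
  have hreal : μ.real (⋃ j, stepEvent R n j) = 1 := by
    have hint : ∀ j : Fin m, Integrable (fun ω => R n ω j / (n + 1)) μ := fun j =>
      hR.integrable_comp_of_ae_sum hsum ((continuous_apply j).div_const _)
    calc μ.real (⋃ j, stepEvent R n j) = ∑ j, ∫ ω in stepEvent R n j, (1 : ℝ) ∂μ := by
          simp [measureReal_iUnion_fintype (pairwise_disjoint_stepEvent R n) hA
            fun j => measure_ne_top μ _]
      _ = ∑ j, ∫ ω, R n ω j / (n + 1) ∂μ := sum_congr rfl fun j _ => by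
          simpa using hR.setIntegral_stepEvent n j stronglyMeasurable_const (integrable_const 1)
      _ = ∫ ω, (∑ j, R n ω j) / (n + 1) ∂μ := by
          simp_rw [sum_div]; exact (integral_finsetSum _ fun j _ => hint j).symm
      _ = 1 := by
          rw [integral_congr_ae (g := fun _ => 1) (hsum.mono fun ω hω => by
            rw [hω, div_self (by positivity)])]
          simp
  exact (mem_ae_iff_prob_eq_one (MeasurableSet.iUnion hA)).2
    ((ENNReal.toReal_eq_one_iff _).1 hreal)

lemma ae_sum_eq (hR : IsCyclicUrn μ m j0 R) (n : ℕ) : ∀ᵐ ω ∂μ, ∑ t, R n ω t = n + 1 := by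
  induction n with
  | zero => exact .of_forall fun ω => by simp [hR.init]
  | succ n ih =>
    filter_upwards [hR.ae_mem_iUnion_stepEvent ih, ih] with ω hω hsum
    obtain ⟨j, hj : _ = _⟩ := Set.mem_iUnion.1 hω
    simp only [hj, Pi.add_apply, sum_add_distrib, hsum, sum_incr]
    push_cast; ring

lemma integral_comp_succ (hR : IsCyclicUrn μ m j0 R) (n : ℕ) {φ : (Fin m → ℝ) → ℝ}
    (hφ : Continuous φ) :
    ∫ ω, φ (R (n + 1) ω) ∂μ = ∫ ω, ∑ j, φ (R n ω + incr m j) * (R n ω j / (n + 1)) ∂μ := by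
  have hA := measurableSet_stepEvent hR n
  have hsum := hR.ae_sum_eq n
  have hφj (j : Fin m) : Continuous fun w => φ (w + incr m j) := hφ.comp (continuous_add_const _)
  have hU : (⋃ j, stepEvent R n j) =ᵐ[μ] Set.univ :=
    ae_eq_univ.2 (mem_ae_iff.1 (hR.ae_mem_iUnion_stepEvent hsum))
  calc ∫ ω, φ (R (n + 1) ω) ∂μ = ∑ j, ∫ ω in stepEvent R n j, φ (R (n + 1) ω) ∂μ := by
        rw [← setIntegral_univ, ← setIntegral_congr_set hU, integral_iUnion hA
          (pairwise_disjoint_stepEvent R n)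
          (hR.integrable_comp_of_ae_sum (hR.ae_sum_eq (n + 1)) hφ).integrableOn, tsum_fintype]
    _ = ∑ j, ∫ ω in stepEvent R n j, φ (R n ω + incr m j) ∂μ :=
        sum_congr rfl fun j _ => setIntegral_congr_fun (hA j) fun ω (hω : _ = _) => by rw [hω]
    _ = ∑ j, ∫ ω, φ (R n ω + incr m j) * (R n ω j / (n + 1)) ∂μ :=
        sum_congr rfl fun j _ => hR.setIntegral_stepEvent n j
          ((hφj j).measurable.comp (measurable_urnFilt n)).stronglyMeasurable
          (hR.integrable_comp_of_ae_sum hsum (hφj j))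
    _ = _ := (integral_finsetSum _ fun j _ => hR.integrable_comp_of_ae_sum hsum
          ((hφj j).mul ((continuous_apply j).div_const _))).symm

lemma integral_altSum_sq_succ (hR : IsCyclicUrn μ m j0 R) (hme : 2 ∣ m) (n : ℕ) :
    ∫ ω, altSum (R (n + 1) ω) ^ 2 ∂μ = (1 - 2 / (n + 1)) * ∫ ω, altSum (R n ω) ^ 2 ∂μ + 1 := by
  have := hR.isProb
  have hφ : Continuous fun w : Fin m → ℝ => altSum w ^ 2 := continuous_altSum.pow 2
  calc ∫ ω, altSum (R (n + 1) ω) ^ 2 ∂μ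
      = ∫ ω, ((1 - 2 / (n + 1)) * altSum (R n ω) ^ 2 + 1) ∂μ := by
        rw [hR.integral_comp_succ n hφ]
        refine integral_congr_ae ?_
        filter_upwards [hR.ae_sum_eq n] with ω hω
        exact sum_altSum_add_incr_sq_mul hme (R n ω) hω (by positivity)
    _ = _ := by
        rw [integral_add ((hR.integrable_comp_of_ae_sum (hR.ae_sum_eq n) hφ).const_mul _)
          (integrable_const 1), integral_const_mul]
        simp

lemma integral_altSum_sq_zero (hR : IsCyclicUrn μ m j0 R) : ∫ ω, altSum (R 0 ω) ^ 2 ∂μ = 1 := by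
  have := hR.isProb
  simp [hR.init, altSum, ← pow_mul]

lemma integral_altSum_sq (hR : IsCyclicUrn μ m j0 R) (hme : 2 ∣ m) {n : ℕ} (hn : 2 ≤ n) :
    ∫ ω, altSum (R n ω) ^ 2 ∂μ = (n + 1) / 3 := by
  induction n, hn using Nat.le_induction with
  | base =>
    rw [hR.integral_altSum_sq_succ hme 1, hR.integral_altSum_sq_succ hme 0,
      hR.integral_altSum_sq_zero]
    norm_num
  | succ n hn ih =>
    rw [hR.integral_altSum_sq_succ hme n, ih]
    push_cast
    field_simp
    ring

end IsCyclicUrn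

lemma cw_pow_div_two {m : ℕ} (hm : m ≠ 0) (hme : 2 ∣ m) : cw m ^ (m / 2) = -1 := by
  have hroot := (Complex.isPrimitiveRoot_exp m hm).pow_of_dvd (by omega) (Nat.div_dvd_of_dvd hme)
  rw [Nat.div_div_self hme hm] at hroot
  exact hroot.eq_neg_one_of_two_right

lemma ucoef_div_two {m : ℕ} (hm : m ≠ 0) (hme : 2 ∣ m) (w : Fin m → ℝ) :
    ucoef m (m / 2) w = (CyclicUrn.altSum w : ℂ) := by
  simp [ucoef, CyclicUrn.altSum, pow_mul, cw_pow_div_two hm hme]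

theorem stmt8 {Ω : Type*} [MeasurableSpace Ω] (μ : Measure Ω) (m : ℕ) (hm : 2 ≤ m)
    (hme : 2 ∣ m) (R : ℕ → Ω → Fin m → ℝ) (hR : IsCyclicUrn μ m ⟨0, by omega⟩ R)
    (n : ℕ) (hn : 2 ≤ n) :
    (∀ ω, (ucoef m (m / 2) (R n ω)).im = 0 ∧
      (ucoef m (m / 2) (R n ω)).re = ∑ t : Fin m, (-1 : ℝ) ^ (t : ℕ) * R n ω t) ∧
    ∫ ω, ((ucoef m (m / 2) (R n ω)).re) ^ 2 ∂μ = ((n : ℝ) + 1) / 3 := by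
  have hu (ω : Ω) := ucoef_div_two (by omega) hme (R n ω)
  refine ⟨fun ω => by simp only [hu, ofReal_im, ofReal_re, CyclicUrn.altSum, and_self], ?_⟩
  simpa [hu] using hR.integral_altSum_sq hme hn
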